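/- Let r₁ : C₁ → B and r₂ : C₂ → B be surjective chain maps of finite-dimensional Hilbert cochain complexes and let C₁ ⊕_θ C₂ be defined by the matching condition cos(θ)·r₁ξ₁ = sin(θ)·r₂ξ₂. Then for all θ ∈ ℝ the sequence 0 → C_{1,r} ⊕ C_{2,r} →^{γ₁+γ₂} C₁ ⊕_θ C₂ →^{r_θ} B → 0 is exact, where C_{j,r} = ker r_j, γ_j are the natural inclusions, and r_θ(ξ₁, ξ₂) = sin(θ)·r₁ξ₁ + cos(θ)·r₂ξ₂. -/

import Mathlib

noncomputable section

section

variable (C₁ C₂ B : ℕ → Type)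
  [∀ j, NormedAddCommGroup (C₁ j)] [∀ j, InnerProductSpace ℂ (C₁ j)]
  [∀ j, FiniteDimensional ℂ (C₁ j)]
  [∀ j, NormedAddCommGroup (C₂ j)] [∀ j, InnerProductSpace ℂ (C₂ j)]
  [∀ j, FiniteDimensional ℂ (C₂ j)]
  [∀ j, NormedAddCommGroup (B j)] [∀ j, InnerProductSpace ℂ (B j)]
  [∀ j, FiniteDimensional ℂ (B j)]

/-- The orthogonal direct sum `C₁ ⊕ C₂` in degree `j`. -/
abbrev SumC (j : ℕ) : Type := WithLp 2 (C₁ j × C₂ j)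

variable (d₁ : ∀ j, C₁ j →ₗ[ℂ] C₁ (j + 1)) (d₂ : ∀ j, C₂ j →ₗ[ℂ] C₂ (j + 1))
variable (r₁ : ∀ j, C₁ j →ₗ[ℂ] B j) (r₂ : ∀ j, C₂ j →ₗ[ℂ] B j) (θ : ℝ)

/-- The differential `d¹ ⊕ d²`. -/
def sumD (j : ℕ) : SumC C₁ C₂ j →ₗ[ℂ] SumC C₁ C₂ (j + 1) :=
  (WithLp.linearEquiv 2 ℂ (C₁ (j + 1) × C₂ (j + 1))).symm.toLinearMap ∘ₗ
    LinearMap.prodMap (d₁ j) (d₂ j) ∘ₗ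
    (WithLp.linearEquiv 2 ℂ (C₁ j × C₂ j)).toLinearMap

/-- The constraint map whose kernel is `(C₁ ⊕_θ C₂)^j`,
`(ξ₁, ξ₂) ↦ cos θ · r₁ ξ₁ - sin θ · r₂ ξ₂`. -/
def constraintMap (j : ℕ) : SumC C₁ C₂ j →ₗ[ℂ] B j :=
  ((Real.cos θ : ℂ) • (r₁ j ∘ₗ LinearMap.fst ℂ (C₁ j) (C₂ j))
      - (Real.sin θ : ℂ) • (r₂ j ∘ₗ LinearMap.snd ℂ (C₁ j) (C₂ j))) ∘ₗ
    (WithLp.linearEquiv 2 ℂ (C₁ j × C₂ j)).toLinearMap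

/-- `(C₁ ⊕_θ C₂)^j = {(ξ₁,ξ₂) : cos θ · r₁ ξ₁ = sin θ · r₂ ξ₂}`. -/
def Dtheta (j : ℕ) : Submodule ℂ (SumC C₁ C₂ j) :=
  LinearMap.ker (constraintMap C₁ C₂ B r₁ r₂ θ j)

/-- `γ₁ + γ₂ : ker r₁ ⊕ ker r₂ → C₁ ⊕_θ C₂`, the natural inclusion. -/
def gammaTheta (j : ℕ) :
    WithLp 2 (↥(LinearMap.ker (r₁ j)) × ↥(LinearMap.ker (r₂ j))) →ₗ[ℂ]
      ↥(Dtheta C₁ C₂ B r₁ r₂ θ j) :=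
  LinearMap.codRestrict (Dtheta C₁ C₂ B r₁ r₂ θ j)
    ((WithLp.linearEquiv 2 ℂ (C₁ j × C₂ j)).symm.toLinearMap ∘ₗ
      LinearMap.prodMap (LinearMap.ker (r₁ j)).subtype (LinearMap.ker (r₂ j)).subtype ∘ₗ
      (WithLp.linearEquiv 2 ℂ (↥(LinearMap.ker (r₁ j)) × ↥(LinearMap.ker (r₂ j)))).toLinearMap)
    (fun x => by
      have hx1 : r₁ j ((WithLp.equiv 2 _ x).1 : C₁ j) = 0 :=
        ((WithLp.equiv 2 (↥(LinearMap.ker (r₁ j)) × ↥(LinearMap.ker (r₂ j))) x).1).2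
      have hx2 : r₂ j ((WithLp.equiv 2 _ x).2 : C₂ j) = 0 :=
        ((WithLp.equiv 2 (↥(LinearMap.ker (r₁ j)) × ↥(LinearMap.ker (r₂ j))) x).2).2
      simp [Dtheta, constraintMap, LinearMap.mem_ker, hx1, hx2])

/-- `r_θ : C₁ ⊕_θ C₂ → B`, `(ξ₁, ξ₂) ↦ sin θ · r₁ ξ₁ + cos θ · r₂ ξ₂`. -/
def rTheta (j : ℕ) : ↥(Dtheta C₁ C₂ B r₁ r₂ θ j) →ₗ[ℂ] B j :=
  (((Real.sin θ : ℂ) • (r₁ j ∘ₗ LinearMap.fst ℂ (C₁ j) (C₂ j))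
      + (Real.cos θ : ℂ) • (r₂ j ∘ₗ LinearMap.snd ℂ (C₁ j) (C₂ j))) ∘ₗ
    (WithLp.linearEquiv 2 ℂ (C₁ j × C₂ j)).toLinearMap) ∘ₗ
    (Dtheta C₁ C₂ B r₁ r₂ θ j).subtype

end

/-!
With `c = cos θ`, `s = sin θ`, the pair `(c a - s b, s a + c b)` is a rotation of `(a, b)`, so it
vanishes only when `a = b = 0`. Applied to `a = r₁ ξ₁`, `b = r₂ ξ₂`, this says that an element of
`C₁ ⊕_θ C₂` lies in the kernel of `r_θ` exactly when both components lie in `ker r₁`, `ker r₂`.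
For surjectivity, `b` is hit by `(ξ₁, ξ₂)` with `r₁ ξ₁ = sin θ • b` and `r₂ ξ₂ = cos θ • b`.
-/

theorem smul_eq_smul_and_smul_add_smul_eq_zero_iff {R M : Type*} [CommRing R] [AddCommGroup M]
    [Module R M] {c s : R} (hcs : s * s + c * c = 1) {a b : M} :
    c • a = s • b ∧ s • a + c • b = 0 ↔ a = 0 ∧ b = 0 := by
  constructor
  · rintro ⟨hcon, hsum⟩
    have hcon' : c • a - s • b = 0 := sub_eq_zero.mpr hcon
    constructor
    · calc a = (s * s + c * c) • a := by rw [hcs, one_smul]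
        _ = c • (c • a - s • b) + s • (s • a + c • b) := by module
        _ = 0 := by rw [hcon', hsum, smul_zero, smul_zero, add_zero]
    · calc b = (s * s + c * c) • b := by rw [hcs, one_smul]
        _ = -s • (c • a - s • b) + c • (s • a + c • b) := by module
        _ = 0 := by rw [hcon', hsum, smul_zero, smul_zero, add_zero]
  · rintro ⟨rfl, rfl⟩
    simp

theorem Complex.ofReal_sin_mul_add_cos_mul (θ : ℝ) :
    (Real.sin θ : ℂ) * Real.sin θ + Real.cos θ * Real.cos θ = 1 := by
  norm_cast
  rw [← sq, ← sq, Real.sin_sq_add_cos_sq]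

section

variable {C₁ C₂ B : ℕ → Type}
  [∀ j, NormedAddCommGroup (C₁ j)] [∀ j, InnerProductSpace ℂ (C₁ j)]
  [∀ j, NormedAddCommGroup (C₂ j)] [∀ j, InnerProductSpace ℂ (C₂ j)]
  [∀ j, NormedAddCommGroup (B j)] [∀ j, InnerProductSpace ℂ (B j)]
  {r₁ : ∀ j, C₁ j →ₗ[ℂ] B j} {r₂ : ∀ j, C₂ j →ₗ[ℂ] B j} {θ : ℝ} {j : ℕ}

theorem mem_Dtheta_iff {x : SumC C₁ C₂ j} :
    x ∈ Dtheta C₁ C₂ B r₁ r₂ θ j ↔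
      (Real.cos θ : ℂ) • r₁ j x.fst = (Real.sin θ : ℂ) • r₂ j x.snd := by
  simp [Dtheta, constraintMap, sub_eq_zero]

theorem rTheta_apply (x : Dtheta C₁ C₂ B r₁ r₂ θ j) :
    rTheta C₁ C₂ B r₁ r₂ θ j x =
      (Real.sin θ : ℂ) • r₁ j (x : SumC C₁ C₂ j).fst +
        (Real.cos θ : ℂ) • r₂ j (x : SumC C₁ C₂ j).snd :=
  rfl

theorem gammaTheta_injective : Function.Injective (gammaTheta C₁ C₂ B r₁ r₂ θ j) := by
  intro z w h
  have h' : ((z.fst : C₁ j), (z.snd : C₂ j)) = ((w.fst : C₁ j), (w.snd : C₂ j)) :=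
    congrArg (fun x : Dtheta C₁ C₂ B r₁ r₂ θ j => (x : SumC C₁ C₂ j).ofLp) h
  rw [Prod.mk.injEq] at h'
  exact WithLp.ofLp_injective 2 (Prod.ext (Subtype.ext h'.1) (Subtype.ext h'.2))

theorem mem_range_gammaTheta_iff {x : Dtheta C₁ C₂ B r₁ r₂ θ j} :
    x ∈ LinearMap.range (gammaTheta C₁ C₂ B r₁ r₂ θ j) ↔
      r₁ j (x : SumC C₁ C₂ j).fst = 0 ∧ r₂ j (x : SumC C₁ C₂ j).snd = 0 := by
  constructor
  · rintro ⟨z, rfl⟩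
    exact ⟨z.fst.2, z.snd.2⟩
  · rintro ⟨h₁, h₂⟩
    exact ⟨WithLp.toLp 2 (⟨_, h₁⟩, ⟨_, h₂⟩), Subtype.ext rfl⟩

theorem range_gammaTheta_eq_ker_rTheta :
    LinearMap.range (gammaTheta C₁ C₂ B r₁ r₂ θ j) = LinearMap.ker (rTheta C₁ C₂ B r₁ r₂ θ j) := by
  ext x
  rw [mem_range_gammaTheta_iff, LinearMap.mem_ker, rTheta_apply,
    ← smul_eq_smul_and_smul_add_smul_eq_zero_iff (Complex.ofReal_sin_mul_add_cos_mul θ)]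
  exact and_iff_right (mem_Dtheta_iff.mp x.2)

theorem rTheta_surjective (hr₁ : Function.Surjective (r₁ j)) (hr₂ : Function.Surjective (r₂ j)) :
    Function.Surjective (rTheta C₁ C₂ B r₁ r₂ θ j) := by
  intro b
  obtain ⟨ξ₁, hξ₁⟩ := hr₁ ((Real.sin θ : ℂ) • b)
  obtain ⟨ξ₂, hξ₂⟩ := hr₂ ((Real.cos θ : ℂ) • b)
  have hmem : WithLp.toLp 2 (ξ₁, ξ₂) ∈ Dtheta C₁ C₂ B r₁ r₂ θ j := by
    rw [mem_Dtheta_iff, WithLp.toLp_fst, WithLp.toLp_snd, hξ₁, hξ₂, smul_comm]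
  refine ⟨⟨_, hmem⟩, ?_⟩
  rw [rTheta_apply, WithLp.toLp_fst, WithLp.toLp_snd, hξ₁, hξ₂, smul_smul, smul_smul, ← add_smul,
    Complex.ofReal_sin_mul_add_cos_mul, one_smul]

end

theorem gamma_rtheta_exact_general
    (C₁ C₂ B : ℕ → Type)
    [∀ j, NormedAddCommGroup (C₁ j)] [∀ j, InnerProductSpace ℂ (C₁ j)]
    [∀ j, NormedAddCommGroup (C₂ j)] [∀ j, InnerProductSpace ℂ (C₂ j)]
    [∀ j, NormedAddCommGroup (B j)] [∀ j, InnerProductSpace ℂ (B j)]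
    (r₁ : ∀ j, C₁ j →ₗ[ℂ] B j) (r₂ : ∀ j, C₂ j →ₗ[ℂ] B j)
    (hr₁ : ∀ j, Function.Surjective (r₁ j)) (hr₂ : ∀ j, Function.Surjective (r₂ j))
    (θ : ℝ) (j : ℕ) :
    Function.Injective (gammaTheta C₁ C₂ B r₁ r₂ θ j) ∧
      Function.Surjective (rTheta C₁ C₂ B r₁ r₂ θ j) ∧
      LinearMap.range (gammaTheta C₁ C₂ B r₁ r₂ θ j)
        = LinearMap.ker (rTheta C₁ C₂ B r₁ r₂ θ j) :=
  ⟨gammaTheta_injective, rTheta_surjective (hr₁ j) (hr₂ j), range_gammaTheta_eq_ker_rTheta⟩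

/-- for surjective chain maps `r₁ : C₁ → B`, `r₂ : C₂ → B` of
finite-dimensional Hilbert cochain complexes and every `θ ∈ ℝ`, the sequence
`0 → C_{1,r} ⊕ C_{2,r} →^{γ₁+γ₂} C₁ ⊕_θ C₂ →^{r_θ} B → 0` is exact in each degree. -/
theorem gamma_rtheta_exact
    (C₁ C₂ B : ℕ → Type)
    [∀ j, NormedAddCommGroup (C₁ j)] [∀ j, InnerProductSpace ℂ (C₁ j)]
    [∀ j, FiniteDimensional ℂ (C₁ j)]
    [∀ j, NormedAddCommGroup (C₂ j)] [∀ j, InnerProductSpace ℂ (C₂ j)]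
    [∀ j, FiniteDimensional ℂ (C₂ j)]
    [∀ j, NormedAddCommGroup (B j)] [∀ j, InnerProductSpace ℂ (B j)]
    [∀ j, FiniteDimensional ℂ (B j)]
    (d₁ : ∀ j, C₁ j →ₗ[ℂ] C₁ (j + 1)) (d₂ : ∀ j, C₂ j →ₗ[ℂ] C₂ (j + 1))
    (dB : ∀ j, B j →ₗ[ℂ] B (j + 1))
    (hd₁ : ∀ j, d₁ (j + 1) ∘ₗ d₁ j = 0) (hd₂ : ∀ j, d₂ (j + 1) ∘ₗ d₂ j = 0)
    (hdB : ∀ j, dB (j + 1) ∘ₗ dB j = 0)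
    (r₁ : ∀ j, C₁ j →ₗ[ℂ] B j) (r₂ : ∀ j, C₂ j →ₗ[ℂ] B j)
    (hr₁ : ∀ j, Function.Surjective (r₁ j)) (hr₂ : ∀ j, Function.Surjective (r₂ j))
    (hchain₁ : ∀ j, dB j ∘ₗ r₁ j = r₁ (j + 1) ∘ₗ d₁ j)
    (hchain₂ : ∀ j, dB j ∘ₗ r₂ j = r₂ (j + 1) ∘ₗ d₂ j)
    (θ : ℝ) (j : ℕ) :
    Function.Injective (gammaTheta C₁ C₂ B r₁ r₂ θ j) ∧
      Function.Surjective (rTheta C₁ C₂ B r₁ r₂ θ j) ∧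
      LinearMap.range (gammaTheta C₁ C₂ B r₁ r₂ θ j)
        = LinearMap.ker (rTheta C₁ C₂ B r₁ r₂ θ j) :=
  gamma_rtheta_exact_general C₁ C₂ B r₁ r₂ hr₁ hr₂ θ j

end
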